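/- arXiv:2603.16156 — 3 statements merged into one kernel-verified Lean document; each statement's English description precedes it below -/
import Mathlib

section
/- For n ≥ 6, the set of clauses {¬P_{2,1}, …, ¬P_{n−1,1}} ∪ OP_n-axioms is unsatisfiable, i.e., OP_n ⊨ P_{2,1} ∨ P_{3,1} ∨ ⋯ ∨ P_{n−1,1}. -/
/-- A truth assignment `α i j` for the OP variables satisfies all clauses of `OP_n`. -/
def OPsat (n : ℕ) (α : ℕ → ℕ → Bool) : Prop :=
  (∀ i j k : ℕ, 1 ≤ i → i ≤ n → 1 ≤ j → j ≤ n → 1 ≤ k → k ≤ n →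
      i ≠ j → j ≠ k → i ≠ k → α i j = true → α j k = true → α i k = true) ∧
  (∀ i j : ℕ, 1 ≤ i → i ≤ n → 1 ≤ j → j ≤ n → i ≠ j →
      ¬(α i j = true ∧ α j i = true)) ∧
  (∀ j : ℕ, 1 ≤ j → j ≤ n → ∃ i, 1 ≤ i ∧ i ≤ n ∧ i ≠ j ∧ α i j = true)

/-- The `a`-th row (1-indexed) of column `j` in the ordered literal sequence `ℒ_j`:
rows `1, …, j-1, j+1, …, n`. -/
def row (j a : ℕ) : ℕ := if a < j then a else a + 1

/-- First Head clause: `OP_n ⊨ P_{2,1} ∨ ⋯ ∨ P_{n-1,1}`, i.e. assigning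
`P_{2,1},…,P_{n-1,1}` all false is inconsistent with `OP_n`. -/
theorem first_head_clause (n : ℕ) (hn : 6 ≤ n) :
    ∀ α : ℕ → ℕ → Bool, OPsat n α →
      ∃ i, 2 ≤ i ∧ i ≤ n - 1 ∧ α i 1 = true := by
  intro α ⟨hA, hB, hD⟩
  by_contra h
  push_neg at h
  -- D(1): some i ≠ 1 with α i 1 = true; it must be i = n
  obtain ⟨i, hi1, hin, hine, hit⟩ := hD 1 le_rfl (by omega)
  have hiN : i = n := by
    by_contra hne
    have h2 : 2 ≤ i := by omega
    have h3 : i ≤ n - 1 := by omega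
    simpa [hit] using h i h2 h3
  rw [hiN] at hit
  -- α 1 n = false by antisymmetry
  have h1n : α 1 n ≠ true := fun h1 =>
    hB 1 n le_rfl (by omega) (by omega) le_rfl (by omega) ⟨h1, hit⟩
  -- D(n): some j ≠ n with α j n = true
  obtain ⟨j, hj1, hjn, hjne, hjt⟩ := hD n (by omega) le_rfl
  have hj : 2 ≤ j ∧ j ≤ n - 1 := by
    constructor <;> [skip; omega]
    rcases Nat.eq_or_lt_of_le hj1 with h1 | h1
    · exact absurd hjt (h1 ▸ h1n)
    · omega
  -- A(j, n, 1): α j n ∧ α n 1 → α j 1, contradiction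
  have := hA j n 1 hj1 hjn (by omega) le_rfl le_rfl (by omega)
    hjne (by omega) (by omega) hjt hit
  simpa [this] using h j hj.1 hj.2
end

section
/- For n ≥ 6, OP_n semantically entails the clause C(1, n−3) = P_{2,1} ∨ P_{3,1} ∨ ⋯ ∨ P_{n−2,1}: every assignment satisfying all transitivity, antisymmetry, and non-minimality clauses of OP_n must set at least one of P_{2,1}, …, P_{n−2,1} to true. -/
/-- Second Head clause: `OP_n ⊨ C(1, n-3) = P_{2,1} ∨ ⋯ ∨ P_{n-2,1}`. -/
theorem second_head_clause (n : ℕ) (hn : 6 ≤ n) :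
    ∀ α : ℕ → ℕ → Bool, OPsat n α →
      ∃ i, 2 ≤ i ∧ i ≤ n - 2 ∧ α i 1 = true := by
  rintro α ⟨hT, hB, hD⟩
  obtain ⟨i, hi1, hin, hine, hai⟩ := hD 1 (by omega) (by omega)
  by_cases hle : i ≤ n - 2
  · exact ⟨i, by omega, hle, hai⟩
  -- i = n-1 or i = n
  have hi : i = n - 1 ∨ i = n := by omega
  obtain ⟨k, hk1, hkn, hki, hak⟩ := hD i (by omega) (by omega)
  have hkne1 : k ≠ 1 := by
    intro h; subst h
    exact hB 1 i (by omega) (by omega) (by omega) (by omega) (by omega) ⟨hak, hai⟩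
  have hak1 : α k 1 = true :=
    hT k i 1 (by omega) hkn (by omega) (by omega) (by omega) (by omega)
      hki (by omega) (by omega) hak hai
  by_cases hkle : k ≤ n - 2
  · exact ⟨k, by omega, hkle, hak1⟩
  have hk : k = n - 1 ∨ k = n := by omega
  -- k is the other element of {n-1, n}
  obtain ⟨m, hm1, hmn, hmk, ham⟩ := hD k (by omega) (by omega)
  have hmne1 : m ≠ 1 := by
    intro h; subst h
    exact hB 1 k (by omega) (by omega) (by omega) (by omega) (by omega) ⟨ham, hak1⟩
  have hmnei : m ≠ i := by
    intro h; subst h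
    exact hB m k (by omega) hmn (by omega) hkn hmk ⟨ham, hak⟩
  have hmle : m ≤ n - 2 := by omega
  have ham1 : α m 1 = true :=
    hT m k 1 (by omega) hmn (by omega) hkn (by omega) (by omega)
      hmk (by omega) (by omega) ham hak1
  exact ⟨m, by omega, hmle, ham1⟩
end

section
/- For n ≥ 6 and 2 < l ≤ n−2, OP_n entails the Descending Lemma target clause: every assignment satisfying all clauses of OP_n that falsifies the first n−2 variables of column l−1 (i.e., P_{a, l−1} for the n−2 smallest valid rows a) is contradictory; equivalently OP_n ⊨ C(l−1, n−2). -/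
/-- Descending Lemma, semantic content: for `n ≥ 6` and `2 < l ≤ n-2`,
`OP_n ⊨ C(l-1, n-2)`. -/
theorem descending_semantic (n : ℕ) (hn : 6 ≤ n) (l : ℕ) (hl : 2 < l) (hln : l ≤ n - 2) :
    ∀ α : ℕ → ℕ → Bool, OPsat n α →
      ∃ a, 1 ≤ a ∧ a ≤ n - 2 ∧ α (row (l - 1) a) (l - 1) = true := by
  intro α ⟨htr, hanti, hmin⟩
  set j := l - 1 with hj
  have hj1 : 1 ≤ j := by omega
  have hjn : j ≤ n - 3 := by omega
  -- helper: turn a witness i ≤ n-1, i ≠ j into the goal witness a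
  have key : ∀ i : ℕ, 1 ≤ i → i ≤ n - 1 → i ≠ j → α i j = true →
      ∃ a, 1 ≤ a ∧ a ≤ n - 2 ∧ α (row j a) j = true := by
    intro i h1 h2 h3 hα
    by_cases hij : i < j
    · exact ⟨i, h1, by omega, by rwa [row, if_pos hij]⟩
    · refine ⟨i - 1, by omega, by omega, ?_⟩
      rw [row, if_neg (by omega)]
      have : i - 1 + 1 = i := by omega
      rwa [this]
  obtain ⟨i, hi1, hin, hij, hα⟩ := hmin j hj1 (by omega)
  by_cases hi : i ≤ n - 1
  · exact key i hi1 hi hij hα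
  · have hin' : i = n := by omega
    rw [hin'] at hα
    obtain ⟨k, hk1, hkn, hkne, hβ⟩ := hmin n (by omega) le_rfl
    have hkj : k ≠ j := by
      intro h
      rw [h] at hβ
      exact hanti j n hj1 (by omega) (by omega) le_rfl (by omega) ⟨hβ, hα⟩
    have hkj' : α k j = true :=
      htr k n j hk1 hkn (by omega) le_rfl hj1 (by omega) hkne (by omega) hkj hβ hα
    exact key k hk1 (by omega) hkj hkj'
end
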